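/- arXiv:2005.11985 — 6 statements merged into one kernel-verified Lean document; each statement's English description precedes it below -/
import Mathlib

section
/- Let K be a simplicial complex and L ⊆ K a subcomplex such that K collapses to L. Suppose there is a natural number n such that every simplex of L has cardinality at most n+1, every simplex of L is a subset of some simplex of L of cardinality n+1, and every simplex of L of cardinality n is a proper subset of exactly two simplices of L of cardinality n+1. Then L has no free simplex, and hence L is a spine of K. -/
/-- An abstract simplicial complex: a set of finite nonempty sets closed under
passing to nonempty subsets. -/
def SimplicialCpx {V : Type*} (K : Set (Finset V)) : Prop :=
  (∀ s ∈ K, s.Nonempty) ∧ ∀ s ∈ K, ∀ t : Finset V, t.Nonempty → t ⊆ s → t ∈ K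

/-- A simplex `p ∈ K` is principal in `K` if it is not a proper subset of any simplex of `K`. -/
def IsPrincipalIn {V : Type*} (K : Set (Finset V)) (p : Finset V) : Prop :=
  p ∈ K ∧ ∀ q ∈ K, ¬ p ⊂ q

/-- A simplex `s ∈ K` is free in `K` if it is a proper subset of exactly one simplex of `K`. -/
def IsFreeIn {V : Type*} (K : Set (Finset V)) (s : Finset V) : Prop :=
  s ∈ K ∧ ∃! p, p ∈ K ∧ s ⊂ p

/-- Elementary collapse: remove a free simplex `s` together with its unique proper coface `p`. -/
def ElemCollapse {V : Type*} (K K' : Set (Finset V)) : Prop :=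
  ∃ s p : Finset V, IsFreeIn K s ∧ p ∈ K ∧ s ⊂ p ∧ K' = K \ {s, p}

/-- `K` collapses to `L`: `L` is obtained from `K` by a finite sequence of elementary collapses. -/
def CollapsesTo {V : Type*} (K L : Set (Finset V)) : Prop :=
  Relation.ReflTransGen ElemCollapse K L

/-- `K` has a free simplex. -/
def HasFreeSimplex {V : Type*} (K : Set (Finset V)) : Prop :=
  ∃ s, IsFreeIn K s

/-- `S` is a spine of `K`: `K` collapses to `S` and `S` has no free simplex. -/
def IsSpineOf {V : Type*} (S K : Set (Finset V)) : Prop :=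
  CollapsesTo K S ∧ ¬ HasFreeSimplex S

/-- If `K ↘ L` and the polyhedron of `L` is an `n`-dimensional pseudomanifold
(every simplex has cardinality at most `n+1`, every simplex is contained in a simplex of
cardinality `n+1`, and every simplex of cardinality `n` is a proper subset of exactly two
simplices of cardinality `n+1`), then `L` has no free simplex, hence `L` is a spine of `K`. -/
theorem stmt2 {V : Type*} (K L : Set (Finset V)) (hK : SimplicialCpx K)
    (hL : SimplicialCpx L) (hLK : L ⊆ K) (hcol : CollapsesTo K L) (n : ℕ)
    (hbound : ∀ s ∈ L, s.card ≤ n + 1)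
    (htop : ∀ s ∈ L, ∃ t ∈ L, t.card = n + 1 ∧ s ⊆ t)
    (htwo : ∀ s ∈ L, s.card = n → ({t | t ∈ L ∧ t.card = n + 1 ∧ s ⊂ t}).ncard = 2) :
    ¬ HasFreeSimplex L ∧ IsSpineOf L K := by

  have hnofree : ¬ HasFreeSimplex L := by
    rintro ⟨s, hsL, p, ⟨hpL, hsp⟩, huniq⟩
    obtain ⟨t, htL, htc, hst⟩ := htop s hsL
    have hsne : s.Nonempty := hL.1 s hsL
    have hspos : 0 < s.card := Finset.card_pos.mpr hsne
    have hscard := hbound s hsL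
    have hpc := hbound p hpL
    have hsp' := Finset.card_lt_card hsp
    have hsn : s.card ≤ n := by omega
    rcases lt_or_eq_of_le hsn with hlt | heq
    · obtain ⟨u, hsu, hut, huc⟩ :=
        Finset.exists_subsuperset_card_eq hst (le_of_lt hlt) (by omega)
      have huL : u ∈ L := hL.2 t htL u (Finset.card_pos.mp (by omega)) hut
      have hsu' : s ⊂ u := Finset.ssubset_of_ssubset_of_subset
        (Finset.ssubset_iff_subset_ne.mpr ⟨hsu, by intro h; subst h; omega⟩) (subset_refl u)
      have hst' : s ⊂ t := Finset.ssubset_iff_subset_ne.mpr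
        ⟨hst, by intro h; subst h; omega⟩
      have h1 := huniq u ⟨huL, hsu'⟩
      have h2 := huniq t ⟨htL, hst'⟩
      rw [h1] at huc; rw [h2] at htc; omega
    · have h2 := htwo s hsL heq
      rw [Set.ncard_eq_two] at h2
      obtain ⟨a, b, hab, hset⟩ := h2
      have ha : a ∈ {t | t ∈ L ∧ t.card = n + 1 ∧ s ⊂ t} := by rw [hset]; left; rfl
      have hb : b ∈ {t | t ∈ L ∧ t.card = n + 1 ∧ s ⊂ t} := by rw [hset]; right; rfl
      exact hab ((huniq a ⟨ha.1, ha.2.2⟩).trans (huniq b ⟨hb.1, hb.2.2⟩).symm)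
  exact ⟨hnofree, hcol, hnofree⟩
end

section
/- Let (K, C, S) be a layered simplicial complex and let K_S = K ∖ {s₀, p₀, …, s_{m−1}, p_{m−1}} be obtained from K by a finite sequence of elementary S-collapses removing pairs sᵢ, pᵢ ∈ S. If p' ∈ C is principal in K_S and s' ∈ C is a proper face of p' that is free in K_S, then p' is already principal in K and s' is already free in K (so the elementary collapse of K at s' removing p' is defined). Consequently, S-collapses and C-collapses are commuting operations on layered simplicial complexes. -/
/-- Elementary collapse of `K` removing a pair of simplices belonging to the
subcollection `A` (an elementary `A`-collapse). -/
def ElemSubCollapse {V : Type*} (A K K' : Set (Finset V)) : Prop :=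
  ∃ s p : Finset V, s ∈ A ∧ p ∈ A ∧ IsPrincipalIn K p ∧ IsFreeIn K s ∧ s ⊂ p ∧
    K' = K \ {s, p}

/-- Let `(K, C, S)` be a layered simplicial complex and `K_S` obtained from
`K` by a finite sequence of elementary `S`-collapses. If `p' ∈ C` is principal in `K_S`
and `s' ∈ C` is a proper face of `p'` free in `K_S`, then `p'` is already principal in `K`
and `s'` is already free in `K`. -/
theorem stmt4 {V : Type*} (K C S KS : Set (Finset V)) (hK : SimplicialCpx K)
    (hC : SimplicialCpx C) (hS : SimplicialCpx S) (hCK : C ⊆ K) (hSK : S ⊆ K)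
    (hdisj : Disjoint C S)
    (hcol : Relation.ReflTransGen (ElemSubCollapse S) K KS)
    (p' s' : Finset V) (hp'C : p' ∈ C) (hs'C : s' ∈ C)
    (hprin : IsPrincipalIn KS p') (hsub : s' ⊂ p') (hfree : IsFreeIn KS s') :
    IsPrincipalIn K p' ∧ IsFreeIn K s' := by
  -- KS ⊆ K and everything removed lies in S
  have key : ∀ {A B : Set (Finset V)}, Relation.ReflTransGen (ElemSubCollapse S) A B →
      B ⊆ A ∧ ∀ x ∈ A, x ∉ B → x ∈ S := by
    intro A B h
    induction h with
    | refl => exact ⟨le_refl _, fun x hx hx' => absurd hx hx'⟩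
    | @tail b c hab hbc ih =>
      obtain ⟨s, p, hsS, hpS, _, _, _, hc⟩ := hbc
      subst hc
      refine ⟨fun x hx => ih.1 hx.1, fun x hxK hx => ?_⟩
      by_cases hxb : x ∈ b
      · have : x ∈ ({s, p} : Set (Finset V)) := by
          by_contra h
          exact hx ⟨hxb, h⟩
        rcases this with h | h
        · simpa [h] using hsS
        · simp only [Set.mem_singleton_iff] at h; simpa [h] using hpS
      · exact ih.2 x hxK hxb
  obtain ⟨hKS, hrem⟩ := key hcol
  -- a simplex of S containing an element of C leads to contradiction
  have noC : ∀ x ∈ C, x ∉ S := fun x hx hxS => Set.disjoint_left.mp hdisj hx hxS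
  constructor
  · refine ⟨hKS hprin.1, fun q hq hpq => ?_⟩
    by_cases hqKS : q ∈ KS
    · exact hprin.2 q hqKS hpq
    · have hqS : q ∈ S := hrem q hq hqKS
      have : p' ∈ S := hS.2 q hqS p' (hK.1 p' (hKS hprin.1)) hpq.1
      exact noC p' hp'C this
  · obtain ⟨hs'KS, p, ⟨hpKS, hsp⟩, hpu⟩ := hfree
    have hpp' : p' = p := hpu p' ⟨hprin.1, hsub⟩
    subst hpp'
    refine ⟨hKS hs'KS, p', ⟨hKS hprin.1, hsub⟩, fun q ⟨hq, hsq⟩ => ?_⟩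
    by_cases hqKS : q ∈ KS
    · exact hpu q ⟨hqKS, hsq⟩
    · have hqS : q ∈ S := hrem q hq hqKS
      have : s' ∈ S := hS.2 q hqS s' (hK.1 s' (hKS hs'KS)) hsq.1
      exact absurd this (noC s' hs'C)
end

section
/- Let (K, C, S) be the associated layered complex of a divided simplicial complex. Suppose (K, C, S) admits no S-collapse, i.e., there is no simplex q ∈ S that is principal in K and possesses a face free in K. Let (K', C, S) be obtained from (K, C, S) by an elementary intermediate collapse (and hence, iterating, by any intermediate collapse). Then (K', C, S) still admits no S-collapse: there is no simplex q ∈ S that is principal in K' and possesses a face free in K'. -/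
/-- The vertex set of a simplicial complex. -/
def vertexSet {V : Type*} (K : Set (Finset V)) : Set V :=
  {v | ({v} : Finset V) ∈ K}

/-- The subcomplex `S` of the layered complex associated to a divided complex `(K, S⁰)`:
all simplices of `K` whose vertices all lie in `S⁰`. -/
def assocS {V : Type*} (K : Set (Finset V)) (S0 : Set V) : Set (Finset V) :=
  {s ∈ K | ∀ v ∈ s, v ∈ S0}

/-- The subcomplex `C` of the layered complex associated to a divided complex `(K, S⁰)`:
all simplices of `K` whose vertices all lie in the complement of `S⁰`. -/
def assocC {V : Type*} (K : Set (Finset V)) (S0 : Set V) : Set (Finset V) :=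
  {s ∈ K | ∀ v ∈ s, v ∉ S0}

/-- The set of intermediate simplices of a layered complex `(K, C, S)`. -/
def interMed {V : Type*} (K C S : Set (Finset V)) : Set (Finset V) :=
  {s ∈ K | s ∉ C ∧ s ∉ S}

/-- Let `(K, C, S)` be the associated layered complex of a divided complex.
If `(K, C, S)` admits no `S`-collapse (no `q ∈ S` principal in `K` with a face free in
`K`), and `K' = K \ {f, p}` is obtained by an elementary intermediate collapse, then
`(K', C, S)` still admits no `S`-collapse. -/
theorem stmt11 {V : Type*} (K : Set (Finset V)) (S0 : Set V) (hK : SimplicialCpx K)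
    (hS0 : S0 ⊆ vertexSet K)
    (hno : ¬ ∃ q ∈ assocS K S0, IsPrincipalIn K q ∧ ∃ g, g ⊂ q ∧ IsFreeIn K g)
    (f p : Finset V) (hpIM : p ∈ interMed K (assocC K S0) (assocS K S0))
    (hprin : IsPrincipalIn K p) (hfree : IsFreeIn K f) (hfp : f ⊂ p)
    (hiv : ∀ t ∈ assocS K S0, t ⊂ p → t ⊂ f) :
    ¬ ∃ q ∈ assocS K S0, IsPrincipalIn (K \ {f, p}) q ∧
        ∃ g, g ⊂ q ∧ IsFreeIn (K \ {f, p}) g := by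

  haveI := Classical.decEq V
  rintro ⟨q, hqS, ⟨hqK', hqprin⟩, g, hgq, hgK', r, ⟨hrK', hgr⟩, hruniq⟩
  have memK' : ∀ s : Finset V, s ∈ K → s ≠ f → s ≠ p → s ∈ K \ {f, p} :=
    fun s h h1 h2 => ⟨h, by simp [h1, h2]⟩
  have huniq : ∀ y : Finset V, y ∈ K \ {f, p} → g ⊂ y → y = q :=
    fun y h1 h2 => (hruniq y ⟨h1, h2⟩).trans (hruniq q ⟨hqK', hgq⟩).symm
  obtain ⟨hpK, hpnC, hpnS⟩ := hpIM
  have hfK : f ∈ K := hfree.1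
  have hfnS : f ∉ assocS K S0 := fun h => absurd (hiv f h hfp) (ssubset_irrefl f)
  have hqK : q ∈ K := hqS.1
  have hqS0 : ∀ v ∈ q, v ∈ S0 := hqS.2
  have hqf : q ≠ f := fun h => hfnS (h ▸ hqS)
  have hqp : q ≠ p := fun h => hpnS (h ▸ hqS)
  have hgK : g ∈ K := hgK'.1
  have hgS : g ∈ assocS K S0 := ⟨hgK, fun v hv => hqS0 v (hgq.subset hv)⟩
  by_cases hqsp : q ⊂ p
  · -- q ⊂ p, hence q ⊂ f; find a coface of q in K', contradiction
    have hqsf : q ⊂ f := hiv q hqS hqsp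
    obtain ⟨a, haf, haq⟩ := Finset.exists_of_ssubset hqsf
    have htK : insert a q ∈ K := hK.2 f hfK _ (Finset.insert_nonempty _ _)
      (Finset.insert_subset haf hqsf.subset)
    by_cases htf : insert a q = f
    · -- f = insert a q; use b ∈ p \ f
      obtain ⟨b, hbp, hbf⟩ := Finset.exists_of_ssubset hfp
      have hbq : b ∉ q := fun h => hbf (hqsf.subset h)
      have huK : insert b q ∈ K := hK.2 p hpK _ (Finset.insert_nonempty _ _)
        (Finset.insert_subset hbp hqsp.subset)
      have huf : insert b q ≠ f := fun h => hbf (h ▸ Finset.mem_insert_self b q)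
      have hup : insert b q ≠ p := by
        intro h
        have ha : a ∈ insert b q := h ▸ (hfp.subset haf)
        rcases Finset.mem_insert.1 ha with h1 | h1
        · exact hbf (h1 ▸ haf)
        · exact haq h1
      exact hqprin _ (memK' _ huK huf hup) (Finset.ssubset_insert hbq)
    · have htp : insert a q ≠ p := fun h =>
        hfp.not_subset (h ▸ Finset.insert_subset haf hqsf.subset)
      exact hqprin _ (memK' _ htK htf htp) (Finset.ssubset_insert haq)
  · -- q ⊄ p
    have hqprinK : ∀ r ∈ K, ¬ q ⊂ r := by
      intro r hrK hqr
      have hrf : r ≠ f := fun h => hqsp ((h ▸ hqr).trans hfp)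
      have hrp : r ≠ p := fun h => hqsp (h ▸ hqr)
      exact hqprin r (memK' r hrK hrf hrp) hqr
    by_cases hgsf : g ⊆ f
    · -- g ⊊ f: derive contradiction
      obtain ⟨a, haf, haS0⟩ : ∃ a ∈ f, a ∉ S0 := by
        by_contra h; push_neg at h; exact hfnS ⟨hfK, h⟩
      have hag : a ∉ g := fun h => haS0 (hgS.2 a h)
      have htf : insert a g ⊆ f := Finset.insert_subset haf hgsf
      have htK : insert a g ∈ K := hK.2 f hfK _ (Finset.insert_nonempty _ _) htf
      by_cases htf' : insert a g = f
      · -- f = insert a g; use b ∈ p \ f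
        obtain ⟨b, hbp, hbf⟩ := Finset.exists_of_ssubset hfp
        have hbg : b ∉ g := fun h => hbf (hgsf h)
        have hup : insert b g ⊆ p := Finset.insert_subset hbp (hgsf.trans hfp.subset)
        have huK : insert b g ∈ K := hK.2 p hpK _ (Finset.insert_nonempty _ _) hup
        have hune : insert b g ≠ p := by
          intro h
          have ha : a ∈ insert b g := h ▸ hfp.subset haf
          rcases Finset.mem_insert.1 ha with h1 | h1
          · exact hbf (h1 ▸ haf)
          · exact hag h1
        by_cases hbS0 : b ∈ S0
        · have huS : insert b g ∈ assocS K S0 := ⟨huK, by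
            intro v hv
            rcases Finset.mem_insert.1 hv with h1 | h1
            · exact h1 ▸ hbS0
            · exact hgS.2 v h1⟩
          have husp : insert b g ⊂ p := Finset.ssubset_iff_subset_ne.mpr ⟨hup, hune⟩
          exact hbf ((hiv _ huS husp).subset (Finset.mem_insert_self b g))
        · have huf : insert b g ≠ f := fun h => hbf (h ▸ Finset.mem_insert_self b g)
          have huq : insert b g = q := huniq _ (memK' _ huK huf hune)
            (Finset.ssubset_insert hbg)
          exact hqsp (huq ▸ Finset.ssubset_iff_subset_ne.mpr ⟨hup, hune⟩)
      · -- insert a g ⊊ f, so it's a coface of g in K', hence = q, but then q ⊂ p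
        have htp : insert a g ≠ p := fun h => hfp.not_subset (h ▸ htf)
        have htq : insert a g = q := huniq _ (memK' _ htK htf' htp)
          (Finset.ssubset_insert hag)
        exact hqsp (htq ▸ Finset.ssubset_iff_subset_ne.mpr ⟨htf.trans hfp.subset, htp⟩)
    · -- g ⊄ f: then g is free in K with unique coface q, contradicting hno
      have hgnp : ¬ g ⊂ p := fun h => hgsf (hiv g hgS h).subset
      apply hno
      refine ⟨q, hqS, ⟨hqK, hqprinK⟩, g, hgq, hgK, q, ⟨hqK, hgq⟩, ?_⟩
      rintro y ⟨hyK, hgy⟩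
      have hyf : y ≠ f := fun h => hgsf (h ▸ hgy.subset)
      have hyp : y ≠ p := fun h => hgnp (h ▸ hgy)
      exact huniq y (memK' y hyK hyf hyp) hgy
end

section
/- Let (K, C, S) be the associated layered complex of a divided simplicial complex (K, S⁰). Suppose (K, C, S) admits no elementary intermediate collapse, i.e., there is no pair (g, q) with q ∈ IM(K, C, S) principal in K, g a face of q free in K, and every simplex t ∈ S with t ⊊ q satisfying t ⊊ g. If (K', C', S) is obtained from (K, C, S) by an elementary C-collapse (and hence, iterating, by any C-collapse), then (K', C', S) still admits no elementary intermediate collapse. -/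
/-- An elementary intermediate collapse of the layered complex `(K, C, S)` is possible at
the pair `(g, q)`: `q` is intermediate and principal in `K`, `g` is a face of `q` free in
`K`, and every simplex `t ∈ S` with `t ⊊ q` satisfies `t ⊊ g`. -/
def IMCollapseAt {V : Type*} (K C S : Set (Finset V)) (g q : Finset V) : Prop :=
  q ∈ interMed K C S ∧ IsPrincipalIn K q ∧ IsFreeIn K g ∧ g ⊂ q ∧
    ∀ t ∈ S, t ⊂ q → t ⊂ g

/-- Let `(K, C, S)` be the associated layered complex of a divided complex
`(K, S⁰)`. If `(K, C, S)` admits no elementary intermediate collapse and `(K', C', S)`,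
with `K' = K \ {f, p}` and `C' = C \ {f, p}`, is obtained from `(K, C, S)` by an
elementary `C`-collapse, then `(K', C', S)` still admits no elementary intermediate
collapse. -/
theorem stmt12 {V : Type*} (K : Set (Finset V)) (S0 : Set V) (hK : SimplicialCpx K)
    (hS0 : S0 ⊆ vertexSet K)
    (hno : ¬ ∃ g q : Finset V, IMCollapseAt K (assocC K S0) (assocS K S0) g q)
    (f p : Finset V) (hf : f ∈ assocC K S0) (hp : p ∈ assocC K S0)
    (hprin : IsPrincipalIn K p) (hfree : IsFreeIn K f) (hfp : f ⊂ p) :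
    ¬ ∃ g q : Finset V,
        IMCollapseAt (K \ {f, p}) (assocC K S0 \ {f, p}) (assocS K S0) g q := by
  rintro ⟨g, q, ⟨hqK', hqnC', hqnS⟩, hqprin', ⟨hgK', hgEU⟩, hgq, hcond⟩
  obtain ⟨hqK, hqnfp⟩ := hqK'
  obtain ⟨hgK, hgnfp⟩ := hgK'
  -- q ∉ C
  have hqnC : q ∉ assocC K S0 := fun h => hqnC' ⟨h, hqnfp⟩
  -- there is a vertex of q lying in S0
  have hvex : ∃ v ∈ q, v ∈ S0 := by
    by_contra h; push_neg at h; exact hqnC ⟨hqK, h⟩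
  obtain ⟨v, hvq, hvS0⟩ := hvex
  have hvK : ({v} : Finset V) ∈ K :=
    hK.2 q hqK {v} (Finset.singleton_nonempty v) (Finset.singleton_subset_iff.mpr hvq)
  have hvS : ({v} : Finset V) ∈ assocS K S0 := ⟨hvK, by simp [hvS0]⟩
  have hvq' : ({v} : Finset V) ⊂ q := by
    refine Finset.ssubset_iff_subset_ne.mpr ⟨Finset.singleton_subset_iff.mpr hvq, ?_⟩
    intro h; exact hqnS (h ▸ hvS)
  have hvg : v ∈ g :=
    Finset.singleton_subset_iff.mp (hcond {v} hvS hvq').subset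
  -- nothing containing g (or q) can be in C
  have hnotC : ∀ r, r ∈ assocC K S0 → ¬ g ⊆ r := by
    intro r hr hsub
    exact (hr.2 v (hsub hvg)) hvS0
  have hqnotC : ∀ r, r ∈ assocC K S0 → ¬ q ⊆ r := by
    intro r hr hsub
    exact (hr.2 v (hsub hvq)) hvS0
  obtain ⟨w, hw, hwuniq⟩ := hgEU
  have hwq : q = w := hwuniq q ⟨⟨hqK, hqnfp⟩, hgq⟩
  -- g is free in K
  have hgfree : IsFreeIn K g := by
    refine ⟨hgK, q, ⟨hqK, hgq⟩, ?_⟩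
    rintro r ⟨hrK, hgr⟩
    by_cases hrf : r = f
    · exact absurd hgr.subset (hrf ▸ hnotC f hf)
    by_cases hrp : r = p
    · exact absurd hgr.subset (hrp ▸ hnotC p hp)
    have : r ∈ K \ {f, p} := ⟨hrK, by simp [hrf, hrp]⟩
    rw [hwuniq r ⟨this, hgr⟩, hwq]
  -- q is principal in K
  have hqprin : IsPrincipalIn K q := by
    refine ⟨hqK, fun r hrK hqr => ?_⟩
    by_cases hrf : r = f
    · exact absurd hqr.subset (hrf ▸ hqnotC f hf)
    by_cases hrp : r = p
    · exact absurd hqr.subset (hrp ▸ hqnotC p hp)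
    exact hqprin'.2 r ⟨hrK, by simp [hrf, hrp]⟩ hqr
  exact hno ⟨g, q, ⟨hqK, hqnC, hqnS⟩, hqprin, hgfree, hgq, hcond⟩
end

section
/- Let x ∈ Δ and suppose r(x) ∈ ∂F, where ∂F = {y ∈ ℝ^m : yᵢ ≥ 0 for all i, Σᵢ yᵢ = 1, and yⱼ = 0 for some j}. Then x ∈ ∂F. -/
open Finset in
/-- The minimum coordinate of a point of `ℝ^(m+1)`. -/
noncomputable def minCoord {m : ℕ} (x : Fin (m + 1) → ℝ) : ℝ :=
  Finset.univ.inf' Finset.univ_nonempty x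

/-- The geometric simplex `Δ` spanned by the origin and the standard basis vectors:
all points with nonnegative coordinates summing to at most 1. -/
def stdDelta (m : ℕ) : Set (Fin (m + 1) → ℝ) :=
  {x | (∀ i, 0 ≤ x i) ∧ ∑ i, x i ≤ 1}

/-- `Λ`: the boundary of `Δ` minus the interior of the free face, i.e. the points of `Δ`
with some vanishing coordinate. -/
def stdLambda (m : ℕ) : Set (Fin (m + 1) → ℝ) :=
  {x ∈ stdDelta m | ∃ j, x j = 0}

/-- The retraction `r(x) = x - (minᵢ xᵢ)·(1,…,1)`. -/
noncomputable def freeRetr (m : ℕ) (x : Fin (m + 1) → ℝ) : Fin (m + 1) → ℝ :=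
  fun i => x i - minCoord x

/-- The boundary `∂F` of the free face `F = {x ∈ Δ | Σᵢ xᵢ = 1}`. -/
def bdFreeFace (m : ℕ) : Set (Fin (m + 1) → ℝ) :=
  {y | (∀ i, 0 ≤ y i) ∧ ∑ i, y i = 1 ∧ ∃ j, y j = 0}

/-- If `x ∈ Δ` and `r(x) ∈ ∂F`, then `x ∈ ∂F`. -/
theorem stmt15 (m : ℕ) (x : Fin (m + 1) → ℝ) (hx : x ∈ stdDelta m)
    (hr : freeRetr m x ∈ bdFreeFace m) : x ∈ bdFreeFace m := by
  obtain ⟨hx0, hx1⟩ := hx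
  obtain ⟨hr0, hr1, hrj⟩ := hr
  have hmin0 : 0 ≤ minCoord x := Finset.le_inf' _ _ fun i _ => hx0 i
  have hsum : ∑ i, freeRetr m x i = ∑ i, x i - (m + 1) * minCoord x := by
    simp [freeRetr, Finset.sum_sub_distrib, mul_comm]
  have hmin : minCoord x = 0 := by
    nlinarith [hsum, hr1, hx1]
  have hx_eq : freeRetr m x = x := by
    funext i; simp [freeRetr, hmin]
  rw [hx_eq] at hr0 hr1 hrj
  exact ⟨hr0, hr1, hrj⟩
end

section
/- The straight-line homotopy H : Δ × [0,1] → ℝ^m, H(x, t) = (1 − t)·x + t·r(x), is a deformation retraction of Δ onto Λ: H is continuous, H(x, t) ∈ Δ for all x ∈ Δ and t ∈ [0,1], H(x, 0) = x, H(x, 1) = r(x) ∈ Λ, and H(x, t) = x for all t whenever x ∈ Λ. -/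
lemma minCoord_le {m : ℕ} (x : Fin (m + 1) → ℝ) (i : Fin (m + 1)) : minCoord x ≤ x i :=
  Finset.inf'_le _ (Finset.mem_univ i)

lemma minCoord_nonneg {m : ℕ} {x : Fin (m + 1) → ℝ} (hx : ∀ i, 0 ≤ x i) : 0 ≤ minCoord x :=
  Finset.le_inf' _ _ (fun i _ => hx i)

lemma exists_minCoord {m : ℕ} (x : Fin (m + 1) → ℝ) : ∃ j, x j = minCoord x := by
  obtain ⟨j, _, hj⟩ := Finset.exists_mem_eq_inf' (Finset.univ_nonempty) x
  exact ⟨j, hj.symm⟩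

lemma continuous_minCoord {m : ℕ} : Continuous (fun x : Fin (m + 1) → ℝ => minCoord x) := by
  exact Continuous.finset_inf'_apply Finset.univ_nonempty (fun i _ => continuous_apply i)

/-- The straight-line homotopy `H(x, t) = (1 - t)·x + t·r(x)` is a
deformation retraction of `Δ` onto `Λ`: it is continuous on `Δ × [0,1]`, stays in `Δ`,
starts at the identity, ends at the retraction `r` onto `Λ`, and is stationary on `Λ`. -/
theorem stmt17 (m : ℕ) :
    ContinuousOn
      (fun q : (Fin (m + 1) → ℝ) × ℝ =>
        fun i => (1 - q.2) * q.1 i + q.2 * freeRetr m q.1 i)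
      (stdDelta m ×ˢ Set.Icc (0 : ℝ) 1) ∧
    (∀ x ∈ stdDelta m, ∀ t ∈ Set.Icc (0 : ℝ) 1,
      (fun i => (1 - t) * x i + t * freeRetr m x i) ∈ stdDelta m) ∧
    (∀ x ∈ stdDelta m,
      (fun i => (1 - (0 : ℝ)) * x i + (0 : ℝ) * freeRetr m x i) = x) ∧
    (∀ x ∈ stdDelta m,
      (fun i => (1 - (1 : ℝ)) * x i + (1 : ℝ) * freeRetr m x i) = freeRetr m x ∧
        freeRetr m x ∈ stdLambda m) ∧
    (∀ x ∈ stdLambda m, ∀ t ∈ Set.Icc (0 : ℝ) 1,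
      (fun i => (1 - t) * x i + t * freeRetr m x i) = x) := by
  refine ⟨?_, ?_, ?_, ?_, ?_⟩
  · apply Continuous.continuousOn
    apply continuous_pi
    intro i
    have h1 : Continuous fun q : (Fin (m + 1) → ℝ) × ℝ => q.1 i :=
      (continuous_apply i).comp continuous_fst
    have h2 : Continuous fun q : (Fin (m + 1) → ℝ) × ℝ => minCoord q.1 :=
      continuous_minCoord.comp continuous_fst
    exact ((continuous_const.sub continuous_snd).mul h1).add
      (continuous_snd.mul (h1.sub h2))
  · rintro x ⟨hx0, hx1⟩ t ⟨ht0, ht1⟩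
    have hmin : 0 ≤ minCoord x := minCoord_nonneg hx0
    constructor
    · intro i
      have : t * minCoord x ≤ x i :=
        le_trans (mul_le_of_le_one_left hmin ht1) (minCoord_le x i)
      simp only [freeRetr]
      nlinarith
    · have : ∑ i, ((1 - t) * x i + t * freeRetr m x i)
          = ∑ i, x i - (m + 1) * (t * minCoord x) := by
        simp only [freeRetr]
        rw [show ∑ i, ((1 - t) * x i + t * (x i - minCoord x))
            = ∑ i, (x i - t * minCoord x) from Finset.sum_congr rfl fun i _ => by ring,
          Finset.sum_sub_distrib, Finset.sum_const]
        simp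
      rw [this]
      nlinarith [mul_nonneg ht0 hmin]
  · intro x _
    funext i
    simp
  · rintro x ⟨hx0, hx1⟩
    have hmin : 0 ≤ minCoord x := minCoord_nonneg hx0
    refine ⟨by funext i; simp, ⟨⟨fun i => ?_, ?_⟩, ?_⟩⟩
    · simp only [freeRetr]
      linarith [minCoord_le x i]
    · simp only [freeRetr]
      rw [Finset.sum_sub_distrib]
      simp
      nlinarith
    · obtain ⟨j, hj⟩ := exists_minCoord x
      exact ⟨j, by simp [freeRetr, hj]⟩
  · rintro x ⟨⟨hx0, hx1⟩, j, hj⟩ t _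
    have h1 : minCoord x ≤ 0 := hj ▸ minCoord_le x j
    have h2 : minCoord x = 0 := le_antisymm h1 (minCoord_nonneg hx0)
    funext i
    simp only [freeRetr, h2]
    ring
end
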